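/- arXiv:1704.05864 — 3 statements merged into one kernel-verified Lean document; each statement's English description precedes it below -/
import Mathlib

section
/- The generalized covariance of an observable with itself in a Gibbs state is nonnegative: cov_{ω_β(H)}(A,A) = ∫₀¹ Tr(ω_β(H)^{1−τ} A ω_β(H)^{τ} A) dτ − (Tr(ω_β(H) A))² ≥ 0 for every Hermitian A. -/
open Matrix MeasureTheory
open scoped ComplexOrder

noncomputable section

namespace QThermo

variable {ι : Type*} [Fintype ι] [DecidableEq ι]

/-- Matrix exponential. -/
def mexp (A : Matrix ι ι ℂ) : Matrix ι ι ℂ := NormedSpace.exp A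

/-- Gibbs state `ω_β(H) = e^{-βH}/Tr(e^{-βH})`. -/
def gibbs (β : ℝ) (H : Matrix ι ι ℂ) : Matrix ι ι ℂ :=
  (Matrix.trace (mexp ((-β : ℂ) • H)))⁻¹ • mexp ((-β : ℂ) • H)

/-- Matrix logarithm of a Hermitian matrix via its spectral decomposition
(junk value `0` on non-Hermitian inputs; eigenvalue `0` is sent to `Real.log 0 = 0`). -/
def mlog (A : Matrix ι ι ℂ) : Matrix ι ι ℂ :=
  if h : A.IsHermitian then
    (h.eigenvectorUnitary : Matrix ι ι ℂ) *
      Matrix.diagonal (fun i => (Real.log (h.eigenvalues i) : ℂ)) *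
      star (h.eigenvectorUnitary : Matrix ι ι ℂ)
  else 0

/-- von Neumann entropy `S(ρ) = -Tr(ρ log ρ)`. -/
def vNEntropy (ρ : Matrix ι ι ℂ) : ℝ := -(Matrix.trace (ρ * mlog ρ)).re

/-- Quantum relative entropy `S(ρ‖σ) = Tr(ρ (log ρ - log σ))`. -/
def relEntropy (ρ σ : Matrix ι ι ℂ) : ℝ := (Matrix.trace (ρ * (mlog ρ - mlog σ))).re

/-- Non-equilibrium free energy `F(ρ,H) = Tr(ρH) - (1/β) S(ρ)`. -/
def freeEnergy (β : ℝ) (ρ H : Matrix ι ι ℂ) : ℝ :=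
  (Matrix.trace (ρ * H)).re - (1 / β) * vNEntropy ρ

/-- A density matrix: positive semidefinite with unit trace. -/
def IsDensityMatrix (ρ : Matrix ι ι ℂ) : Prop := ρ.PosSemidef ∧ Matrix.trace ρ = 1


/-- Real power of a Hermitian matrix via its spectral decomposition
(junk value `0` on non-Hermitian inputs). -/
def mpow (A : Matrix ι ι ℂ) (τ : ℝ) : Matrix ι ι ℂ :=
  if h : A.IsHermitian then
    (h.eigenvectorUnitary : Matrix ι ι ℂ) *
      Matrix.diagonal (fun i => ((h.eigenvalues i ^ τ : ℝ) : ℂ)) *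
      star (h.eigenvectorUnitary : Matrix ι ι ℂ)
  else 0

/-!
Put `ρ = ω_β(H)` and `c = Tr(ρA)`. Because `ρ^{1-τ} ρ^τ = ρ` and `Tr ρ = 1`, centring `A` at `c`
gives `Tr(ρ^{1-τ} A ρ^τ A) = c² + Tr(ρ^{1-τ} (A - c) ρ^τ (A - c))`. The last trace is
`Tr(Y ρ^τ Yᴴ) ≥ 0` with `Y = ρ^{(1-τ)/2} (A - c)`, so the integrand is at least `c²` for every `τ`.
It is continuous in `τ` because `ρ` is positive definite, so integrating over `[0, 1]` gives the claim.
-/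

section MatrixPower

open scoped MatrixOrder

variable {ρ A : Matrix ι ι ℂ}

theorem mpow_eq_cfc (hA : A.IsHermitian) (τ : ℝ) : mpow A τ = cfc (· ^ τ : ℝ → ℝ) A := by
  rw [hA.cfc_eq, mpow, dif_pos hA, IsHermitian.cfc, Unitary.conjStarAlgAut_apply]
  rfl

theorem mpow_one (hA : A.IsHermitian) : mpow A 1 = A := by
  simp [mpow_eq_cfc hA, cfc_id' ℝ A]

theorem mpow_mul_mpow (hρ : ρ.PosSemidef) {s t : ℝ} (hst : s + t ≠ 0) :
    mpow ρ s * mpow ρ t = mpow ρ (s + t) := by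
  simp only [mpow_eq_cfc hρ.isHermitian]
  rw [← cfc_mul _ _ ρ (ρ.finite_real_spectrum.continuousOn _)
    (ρ.finite_real_spectrum.continuousOn _)]
  refine cfc_congr fun x hx => (Real.rpow_add' ?_ hst).symm
  exact spectrum_nonneg_of_nonneg (nonneg_iff_posSemidef.mpr hρ) hx

theorem posSemidef_mpow (hρ : ρ.PosSemidef) (τ : ℝ) : (mpow ρ τ).PosSemidef := by
  rw [mpow_eq_cfc hρ.isHermitian, ← nonneg_iff_posSemidef]
  exact cfc_nonneg fun x hx =>
    Real.rpow_nonneg (spectrum_nonneg_of_nonneg (nonneg_iff_posSemidef.mpr hρ) hx) τ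

theorem continuous_mpow (hρ : ρ.PosDef) : Continuous (mpow ρ) := by
  show Continuous fun τ => mpow ρ τ
  simp only [mpow, dif_pos hρ.isHermitian]
  refine Continuous.mul (Continuous.mul continuous_const (Continuous.matrix_diagonal ?_))
    continuous_const
  exact continuous_pi fun i => Complex.continuous_ofReal.comp <|
    continuous_const.rpow continuous_id fun _ => Or.inl (hρ.eigenvalues_pos i).ne'

theorem trace_mul_mul_mul_nonneg {𝕜 : Type*} [RCLike 𝕜] {P Q X : Matrix ι ι 𝕜}
    (hP : P.PosSemidef) (hQ : Q.PosSemidef) (hX : X.IsHermitian) :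
    0 ≤ (P * X * Q * X).trace := by
  set S := CFC.sqrt P
  have hS : Sᴴ = S := (CFC.sqrt_nonneg P).isSelfAdjoint
  have hSS : S * S = P := CFC.sqrt_mul_sqrt_self P (nonneg_iff_posSemidef.mpr hP)
  have hcycle : (P * X * Q * X).trace = (S * X * Q * (S * X)ᴴ).trace := by
    rw [conjTranspose_mul, hX.eq, hS, ← hSS, Matrix.mul_assoc S S, Matrix.mul_assoc S,
      Matrix.mul_assoc S, trace_mul_comm S]
    simp only [Matrix.mul_assoc]
  rw [hcycle]
  exact (hQ.mul_mul_conjTranspose_same (S * X)).trace_nonneg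

theorem sq_re_trace_mul_le_re_trace_mpow (hρ : ρ.PosSemidef) (htr : ρ.trace = 1)
    (hA : A.IsHermitian) (τ : ℝ) :
    (ρ * A).trace.re ^ 2 ≤ (mpow ρ (1 - τ) * A * mpow ρ τ * A).trace.re := by
  set P := mpow ρ (1 - τ)
  set Q := mpow ρ τ
  have hPQ : P * Q = ρ := by
    rw [mpow_mul_mpow hρ (by norm_num), sub_add_cancel, mpow_one hρ.isHermitian]
  have hQP : Q * P = ρ := by
    rw [mpow_mul_mpow hρ (by norm_num), add_sub_cancel, mpow_one hρ.isHermitian]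
  set c := (ρ * A).trace.re with hc
  have hA₀ : (A - c • 1).IsHermitian := hA.sub (isHermitian_one.smul (IsSelfAdjoint.all c))
  have hcentred : (P * (A - c • 1) * Q * (A - c • 1)).trace.re =
      (P * A * Q * A).trace.re - c ^ 2 := by
    have hPAQ : (P * A * Q).trace = (ρ * A).trace := by rw [trace_mul_cycle, hQP]
    simp only [mul_sub, sub_mul, Matrix.mul_smul, Matrix.smul_mul, trace_sub, trace_smul, hPQ,
      hPAQ, htr, Complex.sub_re, Complex.real_smul, Complex.re_ofReal_mul, mul_one,
      Complex.ofReal_re, ← hc]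
    ring
  have hnonneg :=
    trace_mul_mul_mul_nonneg (posSemidef_mpow hρ (1 - τ)) (posSemidef_mpow hρ τ) hA₀
  linarith [(Complex.nonneg_iff.mp hnonneg).1]

end MatrixPower

theorem posDef_mexp {K : Matrix ι ι ℂ} (hK : K.IsHermitian) : (mexp K).PosDef := by
  set N := NormedSpace.exp ((2⁻¹ : ℝ) • K)
  have hN : N.IsHermitian := (hK.smul (IsSelfAdjoint.all _)).exp
  have hsquare : mexp K = Nᴴ * N := by
    rw [hN.eq, mexp, ← Matrix.exp_add_of_commute _ _ (Commute.refl _), ← add_smul]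
    norm_num
  rw [hsquare]
  exact PosDef.conjTranspose_mul_self N (mulVec_injective_iff_isUnit.mpr (isUnit_exp _))

theorem posDef_mexp_neg_smul (β : ℝ) {H : Matrix ι ι ℂ} (hH : H.IsHermitian) :
    (mexp ((-β : ℂ) • H)).PosDef :=
  posDef_mexp (hH.smul (IsSelfAdjoint.neg (Complex.conj_ofReal β)))

theorem posDef_gibbs [Nonempty ι] (β : ℝ) {H : Matrix ι ι ℂ} (hH : H.IsHermitian) :
    (gibbs β H).PosDef :=
  have hM := posDef_mexp_neg_smul β hH
  hM.smul (inv_pos.mpr hM.trace_pos)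

theorem trace_gibbs [Nonempty ι] (β : ℝ) {H : Matrix ι ι ℂ} (hH : H.IsHermitian) :
    (gibbs β H).trace = 1 := by
  rw [gibbs, trace_smul, smul_eq_mul, inv_mul_cancel₀ (posDef_mexp_neg_smul β hH).trace_pos.ne']

theorem covariance_self_nonneg_general {n : ℕ} (β : ℝ)
    (H A : Matrix (Fin n) (Fin n) ℂ) (hH : H.IsHermitian) (hA : A.IsHermitian) :
    0 ≤ (∫ τ in (0:ℝ)..1,
          (Matrix.trace (mpow (gibbs β H) (1 - τ) * A * mpow (gibbs β H) τ * A)).re) -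
        ((Matrix.trace (gibbs β H * A)).re) ^ 2 := by
  cases isEmpty_or_nonempty (Fin n)
  · simp [Matrix.trace]
  set ρ := gibbs β H
  have hρ : ρ.PosDef := posDef_gibbs β hH
  have hcont : Continuous fun τ : ℝ => (mpow ρ (1 - τ) * A * mpow ρ τ * A).trace.re := by
    have := continuous_mpow hρ
    fun_prop
  rw [sub_nonneg]
  calc (ρ * A).trace.re ^ 2 = ∫ _ in (0:ℝ)..1, (ρ * A).trace.re ^ 2 := by simp
    _ ≤ _ := intervalIntegral.integral_mono_on zero_le_one intervalIntegrable_const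
      (hcont.intervalIntegrable 0 1) fun τ _ =>
        sq_re_trace_mul_le_re_trace_mpow hρ.posSemidef (trace_gibbs β hH) hA τ

/-- nonnegativity of the generalized covariance `cov_{ω_β(H)}(A,A)`. -/
theorem covariance_self_nonneg {n : ℕ} (β : ℝ) (hβ : 0 < β)
    (H A : Matrix (Fin n) (Fin n) ℂ) (hH : H.IsHermitian) (hA : A.IsHermitian) :
    0 ≤ (∫ τ in (0:ℝ)..1,
          (Matrix.trace (mpow (gibbs β H) (1 - τ) * A * mpow (gibbs β H) τ * A)).re) -
        ((Matrix.trace (gibbs β H * A)).re) ^ 2 :=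
  covariance_self_nonneg_general β H A hH hA

end QThermo
end
end

section
/- Linear-response formula for Gibbs states: if H_t is a smooth family of Hermitian matrices, then for any Hermitian A, Tr(A · d/dt ω_β(H_t)|_{t=0}) = −β · cov_{ω_β(H_0)}(A, H'_0), where cov is the generalized (Kubo–Mori) covariance and H'_0 = dH_t/dt|_{t=0}. -/
open MeasureTheory intervalIntegral NormedSpace

namespace QThermoAux

variable {𝔸 : Type*} [NormedRing 𝔸] [NormedAlgebra ℝ 𝔸] [CompleteSpace 𝔸]

theorem duhamel (X Y : 𝔸) :
    exp Y - exp X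
      = ∫ τ in (0:ℝ)..1, exp (τ • Y) * (Y - X) * (exp ((-τ) • X) * exp X) := by
  letI : NormedAlgebra ℚ 𝔸 := NormedAlgebra.restrictScalars ℚ ℝ 𝔸
  have hg : ∀ τ : ℝ, HasDerivAt (fun σ : ℝ => exp (σ • Y) * (exp ((-σ) • X) * exp X))
      (exp (τ • Y) * (Y - X) * (exp ((-τ) • X) * exp X)) τ := by
    intro τ
    have h1 : HasDerivAt (fun σ : ℝ => exp (σ • Y)) (exp (τ • Y) * Y) τ :=
      hasDerivAt_exp_smul_const Y τ
    have h2 : HasDerivAt (fun σ : ℝ => exp (σ • X)) (X * exp ((-τ) • X)) (-τ) :=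
      hasDerivAt_exp_smul_const' X (-τ)
    have h2' : HasDerivAt (fun σ : ℝ => exp ((-σ) • X)) (-(X * exp ((-τ) • X))) τ := by
      simpa [Function.comp_def] using HasDerivAt.scomp (𝕜 := ℝ) τ h2 (hasDerivAt_neg τ)
    have h3 := (h2'.mul_const (exp X))
    have h4 : HasDerivAt (fun σ : ℝ => exp (σ • Y) * (exp ((-σ) • X) * exp X)) _ τ := h1.mul h3
    convert h4 using 1
    noncomm_ring
  have hcont : Continuous fun τ : ℝ => exp (τ • Y) * (Y - X) * (exp ((-τ) • X) * exp X) := by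
    have c1 : Continuous fun τ : ℝ => exp (τ • Y) :=
      exp_continuous.comp (continuous_id.smul continuous_const)
    have c2 : Continuous fun τ : ℝ => exp ((-τ) • X) :=
      exp_continuous.comp (continuous_neg.smul continuous_const)
    exact (c1.mul continuous_const).mul (c2.mul continuous_const)
  have := intervalIntegral.integral_eq_sub_of_hasDerivAt (f := fun σ : ℝ =>
      exp (σ • Y) * (exp ((-σ) • X) * exp X)) (fun τ _ => hg τ)
    (hcont.intervalIntegrable 0 1)
  rw [this]
  have e1 : exp (-X) * exp X = 1 := by
    rw [← exp_add_of_commute ((Commute.refl X).neg_left)]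
    norm_num
  simp [one_smul, zero_smul, exp_zero, e1]


theorem hasDerivAt_exp_comp (X : ℝ → 𝔸) (hX : Continuous X) (hd : DifferentiableAt ℝ X 0) :
    HasDerivAt (fun t => exp (X t))
      (∫ τ in (0:ℝ)..1, exp (τ • X 0) * deriv X 0 * (exp ((-τ) • X 0) * exp (X 0))) 0 := by
  letI : NormedAlgebra ℚ 𝔸 := NormedAlgebra.restrictScalars ℚ ℝ 𝔸
  set K : ℝ → 𝔸 := fun t =>
    ∫ τ in (0:ℝ)..1, exp (τ • X t) * dslope X 0 t * (exp ((-τ) • X 0) * exp (X 0)) with hK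
  have hds : Continuous (dslope X 0) := by
    rw [continuous_iff_continuousAt]
    intro b
    rcases eq_or_ne b 0 with rfl | hb
    · exact (continuousAt_dslope_same).2 hd
    · exact (continuousAt_dslope_of_ne hb).2 hX.continuousAt
  have hKcont : Continuous K := by
    apply intervalIntegral.continuous_parametric_intervalIntegral_of_continuous'
    have c1 : Continuous fun p : ℝ × ℝ => exp (p.2 • X p.1) :=
      exp_continuous.comp (continuous_snd.smul (hX.comp continuous_fst))
    have c2 : Continuous fun p : ℝ × ℝ => exp ((-p.2) • X 0) :=
      exp_continuous.comp ((continuous_snd.neg).smul continuous_const)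
    exact (c1.mul (hds.comp continuous_fst)).mul (c2.mul continuous_const)
  have hK0 : K 0 = ∫ τ in (0:ℝ)..1, exp (τ • X 0) * deriv X 0 * (exp ((-τ) • X 0) * exp (X 0)) := by
    simp [hK, dslope_same]
  have heq : ∀ t : ℝ, t ≠ 0 → exp (X t) - exp (X 0) = t • K t := by
    intro t ht
    have hXt : X t - X 0 = t • dslope X 0 t := by
      rw [dslope_of_ne _ ht, slope_def_module]
      rw [smul_smul, sub_zero, mul_inv_cancel₀ ht, one_smul]
    rw [duhamel (X 0) (X t), hK]
    simp only [hXt, mul_smul_comm, smul_mul_assoc]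
    rw [intervalIntegral.integral_smul]
  rw [hasDerivAt_iff_tendsto_slope, ← hK0]
  have hev : slope (fun t => exp (X t)) 0 =ᶠ[nhdsWithin 0 {(0:ℝ)}ᶜ] K := by
    filter_upwards [self_mem_nhdsWithin] with t ht
    have ht' : t ≠ 0 := ht
    rw [slope_def_module, sub_zero, heq t ht', smul_smul, inv_mul_cancel₀ ht', one_smul]
  exact (hKcont.continuousAt.tendsto.mono_left nhdsWithin_le_nhds).congr' hev.symm

end QThermoAux





open Matrix MeasureTheory
open scoped ComplexOrder

noncomputable section

namespace QThermo

variable {ι : Type*} [Fintype ι] [DecidableEq ι]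

attribute [local instance] Matrix.frobeniusNormedAddCommGroup Matrix.frobeniusNormedSpace

/-- Kubo–Mori rescaled operator `X_{H,β} = ∫₀¹ e^{βτH} X e^{-βτH} dτ`. -/
def resc (β : ℝ) (H X : Matrix ι ι ℂ) : Matrix ι ι ℂ :=
  ∫ τ in (0:ℝ)..1, mexp (((β * τ : ℝ) : ℂ) • H) * X * mexp (((-(β * τ) : ℝ) : ℂ) • H)

/-- Generalized (Kubo–Mori) covariance in the Gibbs state of `H`. -/
def covKM (β : ℝ) (H A B : Matrix ι ι ℂ) : ℂ :=
  Matrix.trace (gibbs β H * resc β H A * B) -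
    Matrix.trace (gibbs β H * A) * Matrix.trace (gibbs β H * B)


attribute [local instance] Matrix.frobeniusNormedRing Matrix.frobeniusNormedAlgebra

instance frobENormedAddMonoid {n : ℕ} : ENormedAddMonoid (Matrix (Fin n) (Fin n) ℂ) :=
  @NormedAddGroup.toENormedAddMonoid _ Matrix.frobeniusNormedAddCommGroup.toNormedAddGroup

section Aux

variable {n : ℕ}

lemma mexp_eq_exp_real (A : Matrix (Fin n) (Fin n) ℂ) :
    mexp A = NormedSpace.exp A := by
  rw [mexp]

lemma trace_exp_ne_zero (hn : 0 < n) (X : Matrix (Fin n) (Fin n) ℂ) (hX : X.IsHermitian) :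
    Matrix.trace (NormedSpace.exp X) ≠ 0 := by
  have hhalf : ((1/2 : ℂ) • X).IsHermitian := by
    rw [Matrix.IsHermitian, Matrix.conjTranspose_smul, hX]
    norm_num
  set B := NormedSpace.exp ((1/2 : ℂ) • X) with hBdef
  have hBH : B.IsHermitian := hhalf.exp
  have hXB : NormedSpace.exp X = B * B := by
    rw [hBdef,
      ← Matrix.exp_add_of_commute _ _ (Commute.refl _)]
    congr 1
    rw [← add_smul]
    norm_num
  have hB0 : B ≠ 0 := by
    haveI : Nonempty (Fin n) := ⟨⟨0, hn⟩⟩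
    exact (Matrix.isUnit_exp _).ne_zero
  obtain ⟨i, j, hij⟩ : ∃ i j, B i j ≠ 0 := by
    by_contra h
    push_neg at h
    exact hB0 (by ext i j; simp [h i j])
  have hBB : Matrix.trace (B * B) = ((∑ i, ∑ j, Complex.normSq (B i j) : ℝ) : ℂ) := by
    nth_rewrite 2 [← hBH]
    rw [Matrix.trace]
    push_cast
    refine Finset.sum_congr rfl fun i _ => ?_
    rw [Matrix.diag_apply, Matrix.mul_apply]
    refine Finset.sum_congr rfl fun j _ => ?_
    rw [Matrix.conjTranspose_apply]
    simp [Complex.star_def, Complex.mul_conj]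
  rw [hXB, hBB]
  rw [Complex.ofReal_ne_zero]
  have hpos : 0 < ∑ i, ∑ j, Complex.normSq (B i j) := by
    apply Finset.sum_pos' (fun i _ => Finset.sum_nonneg fun j _ => Complex.normSq_nonneg _)
    exact ⟨i, Finset.mem_univ i, Finset.sum_pos' (fun j _ => Complex.normSq_nonneg _)
      ⟨j, Finset.mem_univ j, Complex.normSq_pos.2 hij⟩⟩
  exact ne_of_gt hpos

lemma trace_integral (f : ℝ → Matrix (Fin n) (Fin n) ℂ)
    (hf : IntervalIntegrable f MeasureTheory.volume 0 1) (Pl Pr : Matrix (Fin n) (Fin n) ℂ) :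
    ∫ τ in (0:ℝ)..1, Matrix.trace (Pl * f τ * Pr)
      = Matrix.trace (Pl * (∫ τ in (0:ℝ)..1, f τ) * Pr) := by
  set L : Matrix (Fin n) (Fin n) ℂ →L[ℂ] ℂ :=
    LinearMap.toContinuousLinearMap ((Matrix.traceLinearMap (Fin n) ℂ ℂ).comp
      ((LinearMap.mulRight ℂ Pr).comp (LinearMap.mulLeft ℂ Pl))) with hL
  have h1 : ∀ B, L B = Matrix.trace (Pl * B * Pr) := fun B => rfl
  rw [← h1]
  exact L.intervalIntegral_comp_comm hf


lemma smul_neg_beta (β : ℝ) (H0 : Matrix (Fin n) (Fin n) ℂ) (s : ℝ) :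
    s • ((-β : ℂ) • H0) = ((-(β * s) : ℝ) : ℂ) • H0 := by
  rw [smul_comm, ← IsScalarTower.algebraMap_smul ℂ s H0, smul_smul]
  congr 1
  simp [Complex.coe_algebraMap]

lemma resc_eq (β : ℝ) (H0 A : Matrix (Fin n) (Fin n) ℂ) :
    resc β H0 A = ∫ τ in (0:ℝ)..1,
      NormedSpace.exp ((-τ) • ((-β : ℂ) • H0)) * A * NormedSpace.exp (τ • ((-β : ℂ) • H0)) := by
  rw [resc]
  apply intervalIntegral.integral_congr
  intro τ _
  simp only [mexp_eq_exp_real, smul_neg_beta]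
  norm_num

lemma trace_formula_one (β : ℝ) (H0 H' A : Matrix (Fin n) (Fin n) ℂ) :
    Matrix.trace (A * (∫ τ in (0:ℝ)..1,
        NormedSpace.exp (τ • ((-β : ℂ) • H0)) * ((-β : ℂ) • H') *
          (NormedSpace.exp ((-τ) • ((-β : ℂ) • H0)) * NormedSpace.exp ((-β : ℂ) • H0))))
      = -(β : ℂ) * Matrix.trace (NormedSpace.exp ((-β : ℂ) • H0) * resc β H0 A * H') := by
  set S : Matrix (Fin n) (Fin n) ℂ := (-β : ℂ) • H0 with hS
  set P : ℝ → Matrix (Fin n) (Fin n) ℂ := fun τ => NormedSpace.exp (τ • S) with hP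
  set Q : ℝ → Matrix (Fin n) (Fin n) ℂ := fun τ => NormedSpace.exp ((-τ) • S) with hQ
  set E : Matrix (Fin n) (Fin n) ℂ := NormedSpace.exp S with hEd
  have cP : Continuous P := NormedSpace.exp_continuous.comp (continuous_id.smul continuous_const)
  have cQ : Continuous Q :=
    NormedSpace.exp_continuous.comp ((continuous_id.neg).smul continuous_const)
  have hfInt : IntervalIntegrable (fun τ => P τ * ((-β : ℂ) • H') * (Q τ * E))
      MeasureTheory.volume 0 1 :=
    ((cP.mul continuous_const).mul (cQ.mul continuous_const)).intervalIntegrable 0 1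
  have hgInt : IntervalIntegrable (fun τ => Q τ * A * P τ) MeasureTheory.volume 0 1 :=
    ((cQ.mul continuous_const).mul cP).intervalIntegrable 0 1
  have hEQ : ∀ τ : ℝ, Q τ * E = E * Q τ :=
    fun τ => ((((Commute.refl S).smul_left (-τ)).exp)).eq
  have key : ∀ τ : ℝ, Matrix.trace (A * (P τ * ((-β : ℂ) • H') * (Q τ * E)))
      = -(β : ℂ) * Matrix.trace (E * (Q τ * A * P τ) * H') := by
    intro τ
    simp only [mul_smul_comm, smul_mul_assoc, Matrix.trace_smul, smul_eq_mul]
    congr 1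
    rw [hEQ τ]
    rw [show A * (P τ * H' * (E * Q τ)) = (A * (P τ * H' * E)) * Q τ from by noncomm_ring]
    rw [Matrix.trace_mul_comm]
    rw [show Q τ * (A * (P τ * H' * E)) = (Q τ * A * P τ * H') * E from by noncomm_ring]
    rw [Matrix.trace_mul_comm]
    congr 1
    noncomm_ring
  have h1 := trace_integral (fun τ => P τ * ((-β : ℂ) • H') * (Q τ * E)) hfInt A 1
  simp only [Matrix.mul_one] at h1
  rw [← h1, intervalIntegral.integral_congr (g := fun τ =>
      -(β : ℂ) * Matrix.trace (E * (Q τ * A * P τ) * H')) (fun τ _ => key τ),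
    intervalIntegral.integral_const_mul]
  congr 1
  rw [trace_integral (fun τ => Q τ * A * P τ) hgInt E H', resc_eq]

lemma trace_formula_two (β : ℝ) (H0 H' : Matrix (Fin n) (Fin n) ℂ) :
    Matrix.trace (∫ τ in (0:ℝ)..1,
        NormedSpace.exp (τ • ((-β : ℂ) • H0)) * ((-β : ℂ) • H') *
          (NormedSpace.exp ((-τ) • ((-β : ℂ) • H0)) * NormedSpace.exp ((-β : ℂ) • H0)))
      = -(β : ℂ) * Matrix.trace (NormedSpace.exp ((-β : ℂ) • H0) * H') := by
  set S : Matrix (Fin n) (Fin n) ℂ := (-β : ℂ) • H0 with hS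
  set P : ℝ → Matrix (Fin n) (Fin n) ℂ := fun τ => NormedSpace.exp (τ • S) with hP
  set Q : ℝ → Matrix (Fin n) (Fin n) ℂ := fun τ => NormedSpace.exp ((-τ) • S) with hQ
  set E : Matrix (Fin n) (Fin n) ℂ := NormedSpace.exp S with hEd
  have cP : Continuous P := NormedSpace.exp_continuous.comp (continuous_id.smul continuous_const)
  have cQ : Continuous Q :=
    NormedSpace.exp_continuous.comp ((continuous_id.neg).smul continuous_const)
  have hfInt : IntervalIntegrable (fun τ => P τ * ((-β : ℂ) • H') * (Q τ * E))
      MeasureTheory.volume 0 1 :=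
    ((cP.mul continuous_const).mul (cQ.mul continuous_const)).intervalIntegrable 0 1
  have hEQ : ∀ τ : ℝ, Q τ * E = E * Q τ :=
    fun τ => ((((Commute.refl S).smul_left (-τ)).exp)).eq
  have hQP : ∀ τ : ℝ, Q τ * P τ = 1 := by
    intro τ
    rw [hP, hQ, ← Matrix.exp_add_of_commute _ _
      (((Commute.refl S).smul_left (-τ)).smul_right τ)]
    rw [neg_smul, neg_add_cancel, NormedSpace.exp_zero]
  have key : ∀ τ : ℝ, Matrix.trace (P τ * ((-β : ℂ) • H') * (Q τ * E))
      = -(β : ℂ) * Matrix.trace (E * H') := by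
    intro τ
    simp only [mul_smul_comm, smul_mul_assoc, Matrix.trace_smul, smul_eq_mul]
    congr 1
    rw [hEQ τ]
    rw [show P τ * H' * (E * Q τ) = (P τ * H' * E) * Q τ from by noncomm_ring]
    rw [Matrix.trace_mul_comm]
    rw [show Q τ * (P τ * H' * E) = (Q τ * P τ) * (H' * E) from by noncomm_ring]
    rw [hQP τ, one_mul, Matrix.trace_mul_comm]
  have h1 := trace_integral (fun τ => P τ * ((-β : ℂ) • H') * (Q τ * E)) hfInt 1 1
  simp only [Matrix.mul_one, Matrix.one_mul] at h1
  rw [← h1, intervalIntegral.integral_congr (g := fun _ =>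
      -(β : ℂ) * Matrix.trace (E * H')) (fun τ _ => key τ),
    intervalIntegral.integral_const]
  simp


end Aux

/-- linear-response formula for Gibbs states. -/
theorem linear_response_gibbs {n : ℕ} (β : ℝ) (hβ : 0 < β)
    (H : ℝ → Matrix (Fin n) (Fin n) ℂ) (hherm : ∀ t, (H t).IsHermitian)
    (hsmooth : ContDiff ℝ (⊤ : ℕ∞) H) (A : Matrix (Fin n) (Fin n) ℂ) (hA : A.IsHermitian) :
    Matrix.trace (A * deriv (fun t => gibbs β (H t)) 0) =
      -(β : ℂ) * covKM β (H 0) A (deriv H 0) := by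
  rcases Nat.eq_zero_or_pos n with hn | hn
  · subst hn
    simp [covKM, Matrix.trace]
  have hdiff : Differentiable ℝ H := hsmooth.differentiable (by simp)
  have hXcont : Continuous fun t => (-β : ℂ) • H t := hsmooth.continuous.fun_const_smul _
  have hXd : DifferentiableAt ℝ (fun t => (-β : ℂ) • H t) 0 := (hdiff 0).const_smul (-β : ℂ)
  have hD0 := QThermoAux.hasDerivAt_exp_comp (fun t => (-β : ℂ) • H t) hXcont hXd
  have hderH : deriv (fun t => (-β : ℂ) • H t) 0 = (-β : ℂ) • deriv H 0 :=
    deriv_fun_const_smul _ (hdiff 0)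
  erw [hderH] at hD0
  have hD : HasDerivAt (fun t => NormedSpace.exp ((-β : ℂ) • H t))
      (∫ τ in (0:ℝ)..1, NormedSpace.exp (τ • ((-β : ℂ) • H 0)) * ((-β : ℂ) • deriv H 0) *
        (NormedSpace.exp ((-τ) • ((-β : ℂ) • H 0)) * NormedSpace.exp ((-β : ℂ) • H 0))) 0 := by
    simp at hD0 ⊢
    exact hD0
  have hgfun : (fun t => gibbs β (H t)) =
      fun t => (Matrix.trace (NormedSpace.exp ((-β : ℂ) • H t)))⁻¹ •
        NormedSpace.exp ((-β : ℂ) • H t) := by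
    funext t
    rw [gibbs, mexp_eq_exp_real]
  have hXH : ((-β : ℂ) • H 0).IsHermitian := by
    rw [Matrix.IsHermitian, Matrix.conjTranspose_smul, hherm 0]
    congr 1
    simp [Complex.ext_iff]
  have hc : Matrix.trace (NormedSpace.exp ((-β : ℂ) • H 0)) ≠ 0 :=
    trace_exp_ne_zero hn _ hXH
  have hTr : HasDerivAt (fun t => Matrix.trace (NormedSpace.exp ((-β : ℂ) • H t)))
      (Matrix.trace (∫ τ in (0:ℝ)..1, NormedSpace.exp (τ • ((-β : ℂ) • H 0)) *
        ((-β : ℂ) • deriv H 0) *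
        (NormedSpace.exp ((-τ) • ((-β : ℂ) • H 0)) * NormedSpace.exp ((-β : ℂ) • H 0)))) 0 := by
    set L : Matrix (Fin n) (Fin n) ℂ →L[ℂ] ℂ :=
      LinearMap.toContinuousLinearMap (Matrix.traceLinearMap (Fin n) ℂ ℂ) with hLdef
    have hL : ∀ B, L B = Matrix.trace B := fun B => rfl
    have h := ((L.restrictScalars ℝ).hasFDerivAt).comp_hasDerivAt 0 hD
    simp only [Function.comp_def] at h
    exact h
  have hInv : HasDerivAt (fun t => (Matrix.trace (NormedSpace.exp ((-β : ℂ) • H t)))⁻¹)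
      (-(Matrix.trace (∫ τ in (0:ℝ)..1, NormedSpace.exp (τ • ((-β : ℂ) • H 0)) *
          ((-β : ℂ) • deriv H 0) *
          (NormedSpace.exp ((-τ) • ((-β : ℂ) • H 0)) * NormedSpace.exp ((-β : ℂ) • H 0)))) /
        (Matrix.trace (NormedSpace.exp ((-β : ℂ) • H 0)))^2) 0 := by
    have h := HasDerivAt.div (hasDerivAt_const (0:ℝ) (1:ℂ)) hTr hc
    simp [one_div, Pi.div_def] at h ⊢
    exact h
  have hGd : HasDerivAt (fun t => (Matrix.trace (NormedSpace.exp ((-β : ℂ) • H t)))⁻¹ •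
      NormedSpace.exp ((-β : ℂ) • H t))
      ((Matrix.trace (NormedSpace.exp ((-β : ℂ) • H 0)))⁻¹ •
        (∫ τ in (0:ℝ)..1, NormedSpace.exp (τ • ((-β : ℂ) • H 0)) * ((-β : ℂ) • deriv H 0) *
          (NormedSpace.exp ((-τ) • ((-β : ℂ) • H 0)) * NormedSpace.exp ((-β : ℂ) • H 0))) +
        (-(Matrix.trace (∫ τ in (0:ℝ)..1, NormedSpace.exp (τ • ((-β : ℂ) • H 0)) *
          ((-β : ℂ) • deriv H 0) *
          (NormedSpace.exp ((-τ) • ((-β : ℂ) • H 0)) * NormedSpace.exp ((-β : ℂ) • H 0)))) /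
          (Matrix.trace (NormedSpace.exp ((-β : ℂ) • H 0)))^2) •
          NormedSpace.exp ((-β : ℂ) • H 0)) 0 := by
    have h := HasDerivAt.smul hInv hD
    simp at h ⊢
    exact h
  have hderiv : deriv (fun t => gibbs β (H t)) 0 =
      (Matrix.trace (NormedSpace.exp ((-β : ℂ) • H 0)))⁻¹ •
        (∫ τ in (0:ℝ)..1, NormedSpace.exp (τ • ((-β : ℂ) • H 0)) * ((-β : ℂ) • deriv H 0) *
          (NormedSpace.exp ((-τ) • ((-β : ℂ) • H 0)) * NormedSpace.exp ((-β : ℂ) • H 0))) +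
        (-(Matrix.trace (∫ τ in (0:ℝ)..1, NormedSpace.exp (τ • ((-β : ℂ) • H 0)) *
          ((-β : ℂ) • deriv H 0) *
          (NormedSpace.exp ((-τ) • ((-β : ℂ) • H 0)) * NormedSpace.exp ((-β : ℂ) • H 0)))) /
          (Matrix.trace (NormedSpace.exp ((-β : ℂ) • H 0)))^2) •
          NormedSpace.exp ((-β : ℂ) • H 0) := by
    rw [hgfun]; exact hGd.deriv
  rw [hderiv, covKM, gibbs, mexp_eq_exp_real]
  have hAD := trace_formula_one β (H 0) (deriv H 0) A
  have hTD := trace_formula_two β (H 0) (deriv H 0)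
  set D : Matrix (Fin n) (Fin n) ℂ :=
    ∫ τ in (0:ℝ)..1, NormedSpace.exp (τ • ((-β : ℂ) • H 0)) * ((-β : ℂ) • deriv H 0) *
      (NormedSpace.exp ((-τ) • ((-β : ℂ) • H 0)) * NormedSpace.exp ((-β : ℂ) • H 0)) with hDd
  set E : Matrix (Fin n) (Fin n) ℂ := NormedSpace.exp ((-β : ℂ) • H 0) with hEd
  set R : Matrix (Fin n) (Fin n) ℂ := resc β (H 0) A with hRd
  simp only [Matrix.mul_add, Matrix.mul_smul, Matrix.smul_mul, Matrix.trace_add,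
    Matrix.trace_smul, smul_eq_mul]
  rw [hAD, hTD, Matrix.trace_mul_comm A E]
  field_simp
  ring

end QThermo
end
end

section
/- Power bound for a two-bath engine: suppose W > 0, Q_h > 0, Q_c > 0 with Q_c = Q_h − W (first law) and efficiency η = W/Q_h ∈ (0,1), and suppose the cycle time satisfies Δt ≥ Q_c/(g r_c) + Q_h/(g r_h) with g, r_c, r_h > 0. Then the power P = W/Δt satisfies P ≤ g r_c η / (1 − η + r_c/r_h) < g r_h η. -/
open Matrix MeasureTheory
open scoped ComplexOrder

noncomputable section

namespace QThermo

variable {ι : Type*} [Fintype ι] [DecidableEq ι]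

/-!
With `η = W / Q_h` and the first law, the minimal cycle time factors as
`Q_c / (g r_c) + Q_h / (g r_h) = Q_h / (g r_c) · (1 - η + r_c / r_h)`, so the power at any admissible
`Δt` is at most `W` divided by this product. The strict bound clears the denominator and reduces to
`0 < g r_h η (1 - η)`.
-/

lemma sub_div_add_div_eq_mul_one_sub_div_add_div {Qh W g rc rh : ℝ} (hQh : Qh ≠ 0) (hg : g ≠ 0)
    (hrc : rc ≠ 0) :
    (Qh - W) / (g * rc) + Qh / (g * rh) = Qh / (g * rc) * (1 - W / Qh + rc / rh) := by
  field_simp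

lemma mul_div_one_sub_add_div_lt {g rc rh η : ℝ} (hg : 0 < g) (hrc : 0 < rc) (hrh : 0 < rh)
    (hη₀ : 0 < η) (hη₁ : η < 1) :
    g * rc * η / (1 - η + rc / rh) < g * rh * η := by
  have hD : 0 < 1 - η + rc / rh := by have := div_pos hrc hrh; linarith
  rw [div_lt_iff₀ hD]
  have hexpand : g * rh * η * (1 - η + rc / rh) = g * rh * η * (1 - η) + g * rc * η := by
    field_simp
  have hgap : 0 < g * rh * η * (1 - η) := by have := sub_pos.2 hη₁; positivity
  linarith

theorem power_bound_engine_general (W Qh Qc g rc rh Δt : ℝ)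
    (hW : 0 < W) (hQh : 0 < Qh) (hfl : Qc = Qh - W)
    (hg : 0 < g) (hrc : 0 < rc) (hrh : 0 < rh)
    (hη : W / Qh < 1)
    (hΔt : Qc / (g * rc) + Qh / (g * rh) ≤ Δt) :
    W / Δt ≤ g * rc * (W / Qh) / (1 - W / Qh + rc / rh) ∧
      g * rc * (W / Qh) / (1 - W / Qh + rc / rh) < g * rh * (W / Qh) := by
  have hcycle : Qc / (g * rc) + Qh / (g * rh) = Qh / (g * rc) * (1 - W / Qh + rc / rh) := by
    rw [hfl, sub_div_add_div_eq_mul_one_sub_div_add_div hQh.ne' hg.ne' hrc.ne']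
  have hD : 0 < 1 - W / Qh + rc / rh := by have := div_pos hrc hrh; linarith
  have hT : 0 < Qc / (g * rc) + Qh / (g * rh) := by rw [hcycle]; positivity
  refine ⟨?_, mul_div_one_sub_add_div_lt hg hrc hrh (div_pos hW hQh) hη⟩
  calc W / Δt ≤ W / (Qc / (g * rc) + Qh / (g * rh)) := div_le_div_of_nonneg_left hW.le hT hΔt
    _ = g * rc * (W / Qh) / (1 - W / Qh + rc / rh) := by
      rw [hcycle]; field_simp

/-- power bound for a two-bath engine,
`P ≤ g r_c η / (1 − η + r_c/r_h) < g r_h η`. -/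
theorem power_bound_engine (W Qh Qc g rc rh Δt : ℝ)
    (hW : 0 < W) (hQh : 0 < Qh) (hQc : 0 < Qc) (hfl : Qc = Qh - W)
    (hg : 0 < g) (hrc : 0 < rc) (hrh : 0 < rh)
    (hη : W / Qh < 1)
    (hΔt : Qc / (g * rc) + Qh / (g * rh) ≤ Δt) :
    W / Δt ≤ g * rc * (W / Qh) / (1 - W / Qh + rc / rh) ∧
      g * rc * (W / Qh) / (1 - W / Qh + rc / rh) < g * rh * (W / Qh) :=
  power_bound_engine_general W Qh Qc g rc rh Δt hW hQh hfl hg hrc hrh hη hΔt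

end QThermo
end
end
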